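/- Let ρ_{AE} = (1/N)(|0⟩⟨0|_A ⊗ |E⟩⟨E| + |1⟩⟨1|_A ⊗ |F⟩⟨F|) be a classical-quantum state where |E⟩, |F⟩ are (possibly subnormalized) nonzero vectors with ‖E‖² + ‖F‖² = N. Then the conditional von Neumann entropy satisfies S(A|E)_ρ ≥ H(‖E‖²/N) − H(λ) where λ = (1/2)(1 + √((‖E‖²−‖F‖²)² + 4Re²⟨E,F⟩)/N) and H is the binary Shannon entropy. -/

import Mathlib

open Kronecker

/-- Binary Shannon entropy (base 2). -/
noncomputable def binEnt (x : ℝ) : ℝ :=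
  -(x * Real.logb 2 x) - (1 - x) * Real.logb 2 (1 - x)

/-- von Neumann entropy (base 2) of a matrix, via eigenvalues (junk value `0` if
the matrix is not Hermitian). -/
noncomputable def vonNeumann {n : Type*} [Fintype n] [DecidableEq n]
    (ρ : Matrix n n ℂ) : ℝ := by
  classical exact
    if h : ρ.IsHermitian then
      -∑ i, h.eigenvalues i * Real.logb 2 (h.eigenvalues i)
    else 0

/-- Partial trace over the first (qubit) factor. -/
noncomputable def ptraceA {d : ℕ} (ρ : Matrix (Fin 2 × Fin d) (Fin 2 × Fin d) ℂ) :
    Matrix (Fin d) (Fin d) ℂ :=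
  Matrix.of fun i j => ∑ a : Fin 2, ρ (a, i) (a, j)

/-- Rank-one outer product `|v⟩⟨v|`. -/
def outer {n : Type*} (v : n → ℂ) : Matrix n n ℂ := Matrix.of fun i j => v i * star (v j)

/-!
Both `ρAE` and `ptraceA ρAE` are `1/N` times a sum `|u⟩⟨u| + |v⟩⟨v|` of two rank-one matrices,
so each has at most two nonzero eigenvalues. These sum to `1` and their squares sum to `tr ρ²`,
which pins them down as `μ, 1 - μ`; the entropy is then `H(μ)`. For `ρAE` the two vectors
`|0⟩ ⊗ E`, `|1⟩ ⊗ F` are orthogonal and `μ = ‖E‖²/N`. For `ρ_E = (|E⟩⟨E| + |F⟩⟨F|)/N` one gets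
`μ = ½ (1 + √((‖E‖² - ‖F‖²)² + 4 |⟨E, F⟩|²) / N)`, which lies in `[λ, 1]` because
`(Re ⟨E, F⟩)² ≤ |⟨E, F⟩|² ≤ ‖E‖² ‖F‖²`; as `H` decreases on `[½, 1]`, `H(μ) ≤ H(λ)`.
-/

namespace Matrix

theorem rank_add_le {K m n : Type*} [Field K] [Fintype m] [Fintype n] (A B : Matrix m n K) :
    (A + B).rank ≤ A.rank + B.rank :=
  (Submodule.finrank_mono (by rw [mulVecLin_add]; exact LinearMap.range_add_le _ _)).trans
    (Submodule.finrank_add_le_finrank_add_finrank _ _)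

theorem IsHermitian.trace_mul_self_eq_sum_sq_eigenvalues {𝕜 n : Type*} [RCLike 𝕜] [Fintype n]
    [DecidableEq n] {A : Matrix n n 𝕜} (hA : A.IsHermitian) :
    (A * A).trace = ∑ i, ((hA.eigenvalues i ^ 2 : ℝ) : 𝕜) := by
  conv_lhs => rw [hA.spectral_theorem, ← map_mul, Unitary.conjStarAlgAut_apply, trace_mul_cycle,
    Unitary.coe_star_mul_self, one_mul, diagonal_mul_diagonal, trace_diagonal]
  simp [sq]

end Matrix

open Matrix

lemma binEnt_one_sub (x : ℝ) : binEnt (1 - x) = binEnt x := by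
  simp only [binEnt, sub_sub_cancel]
  ring

lemma neg_mul_logb_sub_mul_logb_eq_binEnt {a b μ : ℝ} (hab : a + b = 1)
    (hsq : a ^ 2 + b ^ 2 = μ ^ 2 + (1 - μ) ^ 2) :
    -(a * Real.logb 2 a) - b * Real.logb 2 b = binEnt μ := by
  have hb : b = 1 - a := by linarith
  have hroots : (a - μ) * (a - (1 - μ)) = 0 := by subst hb; linear_combination hsq / 2
  rcases mul_eq_zero.mp hroots with ha | ha
  · rw [hb, sub_eq_zero.mp ha]; rfl
  · rw [hb, sub_eq_zero.mp ha, ← binEnt_one_sub, binEnt, sub_sub_cancel]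

lemma neg_sum_mul_logb_eq_binEnt {n : Type*} [Fintype n] {e : n → ℝ} {μ : ℝ}
    (hsupp : Fintype.card {i // e i ≠ 0} ≤ 2) (hsum : ∑ i, e i = 1)
    (hsq : ∑ i, e i ^ 2 = μ ^ 2 + (1 - μ) ^ 2) :
    -∑ i, e i * Real.logb 2 (e i) = binEnt μ := by
  classical
  set S := Finset.univ.filter fun i => e i ≠ 0
  have restrict {g : n → ℝ} (hg : ∀ i, e i = 0 → g i = 0) : ∑ i ∈ S, g i = ∑ i, g i :=
    Finset.sum_filter_of_ne fun i _ hi h => hi (hg i h)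
  rw [← restrict (g := e) fun _ h => h] at hsum
  rw [← restrict (g := (e · ^ 2)) fun _ h => by simp [h]] at hsq
  rw [← restrict (g := fun i => e i * Real.logb 2 (e i)) fun _ h => by simp [h]]
  rw [Fintype.card_subtype] at hsupp
  interval_cases hS : S.card
  · simp [Finset.card_eq_zero.mp hS] at hsum
  · obtain ⟨i, hi⟩ := Finset.card_eq_one.mp hS
    simp only [hi, Finset.sum_singleton] at hsum hsq ⊢
    simpa using neg_mul_logb_sub_mul_logb_eq_binEnt (a := e i) (b := 0) (by simpa) (by simpa)
  · obtain ⟨i, j, hij, hi⟩ := Finset.card_eq_two.mp hS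
    simp only [hi, Finset.sum_pair hij] at hsum hsq ⊢
    rw [neg_add', neg_mul_logb_sub_mul_logb_eq_binEnt hsum hsq]

lemma vonNeumann_eq_binEnt {n : Type*} [Fintype n] [DecidableEq n] {M : Matrix n n ℂ}
    (hM : M.IsHermitian) (hrank : M.rank ≤ 2) {μ : ℝ} (htr : M.trace = 1)
    (htr_sq : (M * M).trace = ((μ ^ 2 + (1 - μ) ^ 2 : ℝ) : ℂ)) :
    vonNeumann M = binEnt μ := by
  rw [vonNeumann, dif_pos hM]
  refine neg_sum_mul_logb_eq_binEnt (hM.rank_eq_card_non_zero_eigs ▸ hrank) ?_ ?_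
  · exact Complex.ofReal_injective
      ((Complex.ofReal_sum _ _).trans (hM.trace_eq_sum_eigenvalues.symm.trans htr))
  · exact Complex.ofReal_injective
      ((Complex.ofReal_sum _ _).trans (hM.trace_mul_self_eq_sum_sq_eigenvalues.symm.trans htr_sq))

lemma binEnt_antitoneOn : AntitoneOn binEnt (Set.Icc (1 / 2) 1) := by
  intro x hx y hy hxy
  have hbin (t : ℝ) : binEnt t = Real.binEntropy t / Real.log 2 := by
    simp only [binEnt, Real.binEntropy, Real.logb, Real.log_inv]
    ring
  rw [hbin, hbin]
  exact div_le_div_of_nonneg_right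
    (Real.binEntropy_strictAntiOn.antitoneOn (by simpa using hx) (by simpa using hy) hxy)
    (Real.log_pos one_lt_two).le

section Outer

variable {m n : Type*}

lemma outer_eq_vecMulVec (v : n → ℂ) : outer v = vecMulVec v (star v) := rfl

lemma isHermitian_outer (v : n → ℂ) : (outer v).IsHermitian := by
  rw [outer_eq_vecMulVec, IsHermitian, conjTranspose_vecMulVec, star_star]

lemma rank_smul_outer_le_one [Fintype n] (c : ℂ) (v : n → ℂ) : (c • outer v).rank ≤ 1 := by
  rw [outer_eq_vecMulVec, ← vecMulVec_smul]
  exact rank_vecMulVec_le _ _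

lemma trace_outer [Fintype n] (v : n → ℂ) : (outer v).trace = star v ⬝ᵥ v := by
  rw [outer_eq_vecMulVec, trace_vecMulVec, dotProduct_comm]

lemma trace_outer_mul_outer [Fintype n] (u v : n → ℂ) :
    (outer u * outer v).trace = (star u ⬝ᵥ v) * (star v ⬝ᵥ u) := by
  rw [outer_eq_vecMulVec, outer_eq_vecMulVec, vecMulVec_mul_vecMulVec, trace_vecMulVec,
    dotProduct_smul, smul_eq_mul, dotProduct_comm u]

lemma outer_kronecker_outer (a : m → ℂ) (x : n → ℂ) :
    outer a ⊗ₖ outer x = outer fun p : m × n => a p.1 * x p.2 := by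
  ext ⟨i, k⟩ ⟨j, l⟩
  simp only [outer, kroneckerMap_apply, of_apply, star_mul']
  ring

lemma star_dotProduct_kronecker [Fintype m] [Fintype n] (a b : m → ℂ) (x y : n → ℂ) :
    star (fun p : m × n => a p.1 * x p.2) ⬝ᵥ (fun p => b p.1 * y p.2)
      = (star a ⬝ᵥ b) * (star x ⬝ᵥ y) := by
  simp only [dotProduct, Fintype.sum_prod_type, Finset.sum_mul_sum, Pi.star_apply, star_mul']
  exact Finset.sum_congr rfl fun _ _ => Finset.sum_congr rfl fun _ _ => by ring

end Outer

theorem vonNeumann_smul_outer_add_outer_eq_binEnt {n : Type*} [Fintype n] [DecidableEq n]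
    (c μ : ℝ) (u v : n → ℂ) (htr : (c : ℂ) * (star u ⬝ᵥ u + star v ⬝ᵥ v) = 1)
    (htr_sq : (c : ℂ) ^ 2 * ((star u ⬝ᵥ u) ^ 2 + (star v ⬝ᵥ v) ^ 2
      + 2 * ((star u ⬝ᵥ v) * (star v ⬝ᵥ u))) = ((μ ^ 2 + (1 - μ) ^ 2 : ℝ) : ℂ)) :
    vonNeumann ((c : ℂ) • (outer u + outer v)) = binEnt μ := by
  refine vonNeumann_eq_binEnt (((isHermitian_outer u).add (isHermitian_outer v)).smul
    (Complex.conj_ofReal c)) ?_ ?_ ?_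
  · rw [smul_add]
    exact (rank_add_le _ _).trans
      (add_le_add (rank_smul_outer_le_one _ _) (rank_smul_outer_le_one _ _))
  · rw [trace_smul, trace_add, trace_outer, trace_outer, smul_eq_mul, htr]
  · rw [smul_mul_smul, trace_smul, add_mul, mul_add, mul_add, trace_add, trace_add, trace_add,
      trace_outer_mul_outer, trace_outer_mul_outer, trace_outer_mul_outer, trace_outer_mul_outer,
      ← htr_sq, smul_eq_mul]
    ring

section PartialTrace

variable {d : ℕ}

lemma ptraceA_add (X Y : Matrix (Fin 2 × Fin d) (Fin 2 × Fin d) ℂ) :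
    ptraceA (X + Y) = ptraceA X + ptraceA Y := by
  ext i j
  simp [ptraceA, add_add_add_comm]

lemma ptraceA_smul (c : ℂ) (X : Matrix (Fin 2 × Fin d) (Fin 2 × Fin d) ℂ) :
    ptraceA (c • X) = c • ptraceA X := by
  ext i j
  simp [ptraceA, mul_add]

lemma ptraceA_kronecker (A : Matrix (Fin 2) (Fin 2) ℂ) (B : Matrix (Fin d) (Fin d) ℂ) :
    ptraceA (A ⊗ₖ B) = A.trace • B := by
  ext i j
  simp [ptraceA, trace, add_mul]

end PartialTrace

section Entropy

variable {n : Type*} [Fintype n] [DecidableEq n]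

omit [DecidableEq n] in
lemma star_dotProduct_eq_inner (x y : EuclideanSpace ℂ n) :
    star ⇑x ⬝ᵥ ⇑y = inner ℂ x y := by
  rw [EuclideanSpace.inner_eq_star_dotProduct, dotProduct_comm]

theorem vonNeumann_outer_add_outer_normalized (E F : EuclideanSpace ℂ n)
    (hN : 0 < ‖E‖ ^ 2 + ‖F‖ ^ 2) :
    vonNeumann (((1 / (‖E‖ ^ 2 + ‖F‖ ^ 2) : ℝ) : ℂ) • (outer ⇑E + outer ⇑F))
      = binEnt ((1 / 2) * (1 + √((‖E‖ ^ 2 - ‖F‖ ^ 2) ^ 2 + 4 * ‖inner ℂ E F‖ ^ 2)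
          / (‖E‖ ^ 2 + ‖F‖ ^ 2))) := by
  set s := √((‖E‖ ^ 2 - ‖F‖ ^ 2) ^ 2 + 4 * ‖inner ℂ E F‖ ^ 2)
  have hs : s ^ 2 = (‖E‖ ^ 2 - ‖F‖ ^ 2) ^ 2 + 4 * ‖inner ℂ E F‖ ^ 2 :=
    Real.sq_sqrt (by positivity)
  have hEF : inner ℂ E F * inner ℂ F E = ((‖inner ℂ E F‖ ^ 2 : ℝ) : ℂ) := by
    rw [← inner_conj_symm F E, Complex.mul_conj', ← inner_conj_symm, Complex.norm_conj]
    norm_cast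
  apply vonNeumann_smul_outer_add_outer_eq_binEnt
  · simp only [star_dotProduct_eq_inner, inner_self_eq_norm_sq_to_K,
      RCLike.ofReal_eq_complex_ofReal]
    exact_mod_cast one_div_mul_cancel hN.ne'
  · simp only [star_dotProduct_eq_inner, inner_self_eq_norm_sq_to_K,
      RCLike.ofReal_eq_complex_ofReal, hEF]
    norm_cast
    rw [show ∀ t : ℝ, (1 / 2 * (1 + t)) ^ 2 + (1 - 1 / 2 * (1 + t)) ^ 2 = (1 + t ^ 2) / 2 by
      intro t; ring, div_pow s, hs]
    field_simp
    ring

theorem vonNeumann_kronecker_outer_add_normalized {m : Type*} [Fintype m] [DecidableEq m]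
    {a b : m → ℂ} (ha : star a ⬝ᵥ a = 1) (hb : star b ⬝ᵥ b = 1) (hab : star a ⬝ᵥ b = 0)
    (E F : EuclideanSpace ℂ n) (hN : 0 < ‖E‖ ^ 2 + ‖F‖ ^ 2) :
    vonNeumann (((1 / (‖E‖ ^ 2 + ‖F‖ ^ 2) : ℝ) : ℂ) •
        (outer a ⊗ₖ outer ⇑E + outer b ⊗ₖ outer ⇑F))
      = binEnt (‖E‖ ^ 2 / (‖E‖ ^ 2 + ‖F‖ ^ 2)) := by
  have hba : star b ⬝ᵥ a = 0 := by rw [star_dotProduct, hab, star_zero]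
  rw [outer_kronecker_outer, outer_kronecker_outer]
  apply vonNeumann_smul_outer_add_outer_eq_binEnt <;>
    simp only [star_dotProduct_kronecker, star_dotProduct_eq_inner, inner_self_eq_norm_sq_to_K,
      RCLike.ofReal_eq_complex_ofReal, ha, hb, hab, hba, one_mul, zero_mul, mul_zero, add_zero]
  · exact_mod_cast one_div_mul_cancel hN.ne'
  · norm_cast
    field_simp
    ring

end Entropy

lemma sqrt_sub_sq_add_four_norm_inner_sq_le {𝕜 V : Type*} [RCLike 𝕜] [NormedAddCommGroup V]
    [InnerProductSpace 𝕜 V] (x y : V) :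
    √((‖x‖ ^ 2 - ‖y‖ ^ 2) ^ 2 + 4 * ‖inner 𝕜 x y‖ ^ 2) ≤ ‖x‖ ^ 2 + ‖y‖ ^ 2 := by
  have hxy := norm_inner_le_norm (𝕜 := 𝕜) x y
  rw [Real.sqrt_le_iff]
  constructor
  · positivity
  · nlinarith [norm_nonneg (inner 𝕜 x y), mul_nonneg (norm_nonneg x) (norm_nonneg y)]

lemma binEnt_half_one_add_le {s t : ℝ} (hs : 0 ≤ s) (hst : s ≤ t) (ht : t ≤ 1) :
    binEnt (1 / 2 * (1 + t)) ≤ binEnt (1 / 2 * (1 + s)) :=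
  binEnt_antitoneOn ⟨by linarith, by linarith⟩ ⟨by linarith, by linarith⟩ (by linarith)

theorem stmt6_general {d : ℕ} (E F : EuclideanSpace ℂ (Fin d)) (hE : E ≠ 0)
    (N : ℝ) (hN : N = ‖E‖ ^ 2 + ‖F‖ ^ 2)
    (ρAE : Matrix (Fin 2 × Fin d) (Fin 2 × Fin d) ℂ)
    (hρ : ρAE = ((1 / N : ℝ) : ℂ) •
      (outer ![1, 0] ⊗ₖ outer (fun i => E i) + outer ![0, 1] ⊗ₖ outer (fun i => F i)))
    (lam : ℝ)
    (hlam : lam = (1 / 2) * (1 + Real.sqrt ((‖E‖ ^ 2 - ‖F‖ ^ 2) ^ 2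
        + 4 * ((inner ℂ E F : ℂ).re) ^ 2) / N)) :
    binEnt (‖E‖ ^ 2 / N) - binEnt lam ≤ vonNeumann ρAE - vonNeumann (ptraceA ρAE) := by
  subst hN hρ hlam
  have hN : 0 < ‖E‖ ^ 2 + ‖F‖ ^ 2 := by have := norm_pos_iff.2 hE; positivity
  have h0 : star ![(1 : ℂ), 0] ⬝ᵥ ![1, 0] = 1 := by simp [dotProduct]
  have h1 : star ![(0 : ℂ), 1] ⬝ᵥ ![0, 1] = 1 := by simp [dotProduct]
  have h01 : star ![(1 : ℂ), 0] ⬝ᵥ ![0, 1] = 0 := by simp [dotProduct]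
  rw [ptraceA_smul, ptraceA_add, ptraceA_kronecker, ptraceA_kronecker, trace_outer, trace_outer,
    h0, h1, one_smul, one_smul, vonNeumann_kronecker_outer_add_normalized h0 h1 h01 E F hN,
    vonNeumann_outer_add_outer_normalized E F hN, sub_le_sub_iff_left]
  refine binEnt_half_one_add_le (by positivity) ?_
    ((div_le_one hN).2 (sqrt_sub_sq_add_four_norm_inner_sq_le E F))
  gcongr √(_ + 4 * ?_) / _
  exact sq_le_sq.2 ((Complex.abs_re_le_norm _).trans (le_abs_self _))

theorem stmt6 {d : ℕ} (E F : EuclideanSpace ℂ (Fin d)) (hE : E ≠ 0) (hF : F ≠ 0)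
    (N : ℝ) (hN : N = ‖E‖ ^ 2 + ‖F‖ ^ 2)
    (ρAE : Matrix (Fin 2 × Fin d) (Fin 2 × Fin d) ℂ)
    (hρ : ρAE = ((1 / N : ℝ) : ℂ) •
      (outer ![1, 0] ⊗ₖ outer (fun i => E i) + outer ![0, 1] ⊗ₖ outer (fun i => F i)))
    (lam : ℝ)
    (hlam : lam = (1 / 2) * (1 + Real.sqrt ((‖E‖ ^ 2 - ‖F‖ ^ 2) ^ 2
        + 4 * ((inner ℂ E F : ℂ).re) ^ 2) / N)) :
    binEnt (‖E‖ ^ 2 / N) - binEnt lam ≤ vonNeumann ρAE - vonNeumann (ptraceA ρAE) :=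
  stmt6_general E F hE N hN ρAE hρ lam hlam
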